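/- arXiv:2107.04542 — 2 statements merged into one kernel-verified Lean document; each statement's English description precedes it below -/
import Mathlib

section
/- For every natural number n and all p, q ∈ [0, 1], the total variation distance between the binomial distributions with parameters (n, p) and (n, q) is at most n·|p − q|; equivalently, (1/2) · ∑_{k=0}^{n} (n choose k) · |p^k (1−p)^{n−k} − q^k (1−q)^{n−k}| ≤ n · |p − q|. -/
noncomputable def B (n k : ℕ) (p : ℝ) : ℝ := (n.choose k : ℝ) * p ^ k * (1 - p) ^ (n - k)

lemma B_nonneg {n k : ℕ} {p : ℝ} (hp : p ∈ Set.Icc (0:ℝ) 1) : 0 ≤ B n k p := by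
  obtain ⟨h0, h1⟩ := hp
  have : (0:ℝ) ≤ 1 - p := by linarith
  unfold B
  positivity

lemma B_sum (n : ℕ) (p : ℝ) : ∑ k ∈ Finset.range (n+1), B n k p = 1 := by
  have h := add_pow p (1-p) n
  rw [show p + (1-p) = (1:ℝ) by ring, one_pow] at h
  rw [h]
  exact Finset.sum_congr rfl fun k _ => by simp only [B]; ring

lemma B_top (n : ℕ) (p : ℝ) : B n (n+1) p = 0 := by
  simp [B, Nat.choose_eq_zero_of_lt (Nat.lt_succ_self n)]

lemma B_succ_zero (n : ℕ) (p : ℝ) : B (n+1) 0 p = (1-p) * B n 0 p := by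
  simp [B, pow_succ]; ring

lemma B_succ (n j : ℕ) (hj : j ≤ n) (p : ℝ) :
    B (n+1) (j+1) p = p * B n j p + (1-p) * B n (j+1) p := by
  rcases eq_or_lt_of_le hj with rfl | hlt
  · simp [B, Nat.choose_succ_succ, Nat.choose_eq_zero_of_lt (Nat.lt_succ_self j),
      Nat.succ_sub_succ, pow_succ]
    ring
  · have hns : n - j = (n - (j+1)) + 1 := by omega
    simp only [B, Nat.choose_succ_succ, Nat.succ_sub_succ, Nat.cast_add, hns, pow_succ]
    ring

/-- The total variation distance between the binomial distributions with
parameters `(n, p)` and `(n, q)` — i.e. half the ℓ1 distance between their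
probability mass functions — is at most `n * |p − q|`. -/
theorem tv_binomial_le (n : ℕ) (p q : ℝ)
    (hp : p ∈ Set.Icc (0 : ℝ) 1) (hq : q ∈ Set.Icc (0 : ℝ) 1) :
    (1 / 2) * ∑ k ∈ Finset.range (n + 1),
        (n.choose k : ℝ) * |p ^ k * (1 - p) ^ (n - k) - q ^ k * (1 - q) ^ (n - k)| ≤
      n * |p - q| := by
  have hrw : ∀ m k : ℕ, (m.choose k : ℝ) * |p ^ k * (1 - p) ^ (m - k) - q ^ k * (1 - q) ^ (m - k)|
      = |B m k p - B m k q| := by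
    intro m k
    have : B m k p - B m k q
        = (m.choose k : ℝ) * (p ^ k * (1 - p) ^ (m - k) - q ^ k * (1 - q) ^ (m - k)) := by
      simp [B]; ring
    rw [this, abs_mul, abs_of_nonneg (by positivity : (0:ℝ) ≤ (m.choose k : ℝ))]
  have key : ∀ m : ℕ, ∑ k ∈ Finset.range (m+1), |B m k p - B m k q| ≤ 2 * m * |p - q| := by
    intro m
    induction m with
    | zero => simp [B]
    | succ n ih =>
      obtain ⟨hp0, hp1⟩ := hp
      have hDtop : |B n (n+1) p - B n (n+1) q| = 0 := by simp [B_top]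
      have hshiftD : ∑ j ∈ Finset.range (n+1), |B n (j+1) p - B n (j+1) q|
          = (∑ k ∈ Finset.range (n+1), |B n k p - B n k q|) - |B n 0 p - B n 0 q| := by
        have h1 := Finset.sum_range_succ' (fun k => |B n k p - B n k q|) (n+1)
        have h2 := Finset.sum_range_succ (fun k => |B n k p - B n k q|) (n+1)
        rw [h2, hDtop] at h1
        linarith
      have hshiftB : ∑ j ∈ Finset.range (n+1), B n (j+1) q
          = 1 - B n 0 q := by
        have h1 := Finset.sum_range_succ' (fun k => B n k q) (n+1)
        have h2 := Finset.sum_range_succ (fun k => B n k q) (n+1)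
        rw [h2, B_top, B_sum] at h1
        linarith
      have habs4 : ∀ a b c d : ℝ, |a + b + c + d| ≤ |a| + |b| + |c| + |d| := by
        intro a b c d
        calc |a + b + c + d| ≤ |a + b + c| + |d| := abs_add_le _ _
          _ ≤ |a + b| + |c| + |d| := by linarith [abs_add_le (a+b) c]
          _ ≤ |a| + |b| + |c| + |d| := by linarith [abs_add_le a b]
      have hterm : ∀ j ∈ Finset.range (n+1), |B (n+1) (j+1) p - B (n+1) (j+1) q|
          ≤ p * |B n j p - B n j q| + |p - q| * B n j q
            + (1-p) * |B n (j+1) p - B n (j+1) q| + |p - q| * B n (j+1) q := by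
        intro j hj
        rw [Finset.mem_range] at hj
        have hjn : j ≤ n := by omega
        rw [B_succ n j hjn p, B_succ n j hjn q]
        have heq : p * B n j p + (1-p) * B n (j+1) p - (q * B n j q + (1-q) * B n (j+1) q)
            = p * (B n j p - B n j q) + (p - q) * B n j q
              + (1-p) * (B n (j+1) p - B n (j+1) q) + (q - p) * B n (j+1) q := by ring
        rw [heq]
        refine (habs4 _ _ _ _).trans ?_
        rw [abs_mul, abs_mul, abs_mul, abs_mul,
          abs_of_nonneg hp0, abs_of_nonneg (by linarith : (0:ℝ) ≤ 1 - p),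
          abs_of_nonneg (B_nonneg hq), abs_of_nonneg (B_nonneg hq),
          abs_sub_comm q p]
      have hzero : |B (n+1) 0 p - B (n+1) 0 q|
          ≤ (1-p) * |B n 0 p - B n 0 q| + |p - q| * B n 0 q := by
        rw [B_succ_zero, B_succ_zero]
        have heq : (1-p) * B n 0 p - (1-q) * B n 0 q
            = (1-p) * (B n 0 p - B n 0 q) + (q - p) * B n 0 q := by ring
        rw [heq]
        refine (abs_add_le _ _).trans ?_
        rw [abs_mul, abs_mul, abs_of_nonneg (by linarith : (0:ℝ) ≤ 1 - p),
          abs_of_nonneg (B_nonneg hq), abs_sub_comm q p]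
      have hsplit := Finset.sum_range_succ' (fun k => |B (n+1) k p - B (n+1) k q|) (n+1)
      rw [hsplit]
      have hsumle := Finset.sum_le_sum hterm
      have hdist : ∑ j ∈ Finset.range (n+1),
          (p * |B n j p - B n j q| + |p - q| * B n j q
            + (1-p) * |B n (j+1) p - B n (j+1) q| + |p - q| * B n (j+1) q)
          = p * (∑ j ∈ Finset.range (n+1), |B n j p - B n j q|)
            + |p - q| * (∑ j ∈ Finset.range (n+1), B n j q)
            + (1-p) * (∑ j ∈ Finset.range (n+1), |B n (j+1) p - B n (j+1) q|)
            + |p - q| * (∑ j ∈ Finset.range (n+1), B n (j+1) q) := by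
        simp [Finset.sum_add_distrib, Finset.mul_sum]
      rw [hdist] at hsumle
      rw [hshiftD, hshiftB, B_sum] at hsumle
      have habs0 : 0 ≤ |B n 0 p - B n 0 q| := abs_nonneg _
      have hpq : 0 ≤ |p - q| := abs_nonneg _
      have hB0q : 0 ≤ B n 0 q := B_nonneg hq
      have hB0q1 : B n 0 q ≤ 1 := by
        have := B_sum n q
        have hall : ∀ k ∈ Finset.range (n+1), 0 ≤ B n k q := fun k _ => B_nonneg hq
        calc B n 0 q ≤ ∑ k ∈ Finset.range (n+1), B n k q :=
              Finset.single_le_sum hall (by simp)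
          _ = 1 := B_sum n q
      push_cast
      nlinarith [hzero, hsumle, ih]
  have h := key n
  have hrw2 : ∑ k ∈ Finset.range (n + 1),
      (n.choose k : ℝ) * |p ^ k * (1 - p) ^ (n - k) - q ^ k * (1 - q) ^ (n - k)|
      = ∑ k ∈ Finset.range (n+1), |B n k p - B n k q| :=
    Finset.sum_congr rfl (fun k _ => hrw n k)
  rw [hrw2]
  linarith
end

section
/- Let X be a real normed vector space that is not finite-dimensional, equipped with its Borel σ-algebra. Then there is no measure μ on X satisfying both: (i) for every x ∈ X and every real r > 0, the open ball B(x, r) has measure μ(B(x, r)) that is positive and finite; and (ii) any two open balls of equal radius have equal measure, i.e., μ(B(x, r)) = μ(B(y, r)) for all x, y ∈ X and r > 0. -/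
open MeasureTheory

/-- On an infinite-dimensional real normed vector space (with its Borel
σ-algebra), there is no measure giving every open ball positive finite measure
while giving equal measure to balls of equal radius. -/
theorem no_uniform_measure {X : Type*} [NormedAddCommGroup X] [NormedSpace ℝ X]
    [MeasurableSpace X] [BorelSpace X] (h : ¬ FiniteDimensional ℝ X) :
    ¬ ∃ μ : Measure X,
        (∀ (x : X) (r : ℝ), 0 < r →
          0 < μ (Metric.ball x r) ∧ μ (Metric.ball x r) < ⊤) ∧
        (∀ (x y : X) (r : ℝ), 0 < r →
          μ (Metric.ball x r) = μ (Metric.ball y r)) := by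
  rintro ⟨μ, hpf, heq⟩
  obtain ⟨R, f, hR, hfle, hpair⟩ := exists_seq_norm_le_one_le_norm_sub (𝕜 := ℝ) h
  -- balls of radius 1/2 around f n are pairwise disjoint and inside ball 0 (R+1)
  have hdisj : Pairwise (Function.onFun Disjoint fun n => Metric.ball (f n) (1/2)) := by
    intro m n hmn
    apply Metric.ball_disjoint_ball
    have := hpair hmn
    rw [dist_eq_norm]
    linarith
  have hmeas : ∀ n : ℕ, MeasurableSet (Metric.ball (f n) (1/2)) :=
    fun n => Metric.isOpen_ball.measurableSet
  have hsub : (⋃ n, Metric.ball (f n) (1/2)) ⊆ Metric.ball (0 : X) (R + 1) := by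
    rintro x hx
    obtain ⟨n, hn⟩ := Set.mem_iUnion.1 hx
    rw [Metric.mem_ball, dist_zero_right]
    have h1 : dist x (f n) < 1/2 := hn
    have h2 : ‖f n‖ ≤ R := hfle n
    calc ‖x‖ ≤ ‖f n‖ + ‖x - f n‖ := norm_le_insert' x (f n)
      _ < R + 1 := by rw [← dist_eq_norm] at *; linarith
  have hm : ∀ n : ℕ, μ (Metric.ball (f n) (1/2)) = μ (Metric.ball (0 : X) (1/2)) :=
    fun n => heq (f n) 0 (1/2) (by norm_num)
  have hpos : μ (Metric.ball (0 : X) (1/2)) ≠ 0 :=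
    (hpf 0 (1/2) (by norm_num)).1.ne'
  have htop : μ (Metric.ball (0 : X) (R + 1)) = ⊤ := by
    have h1 : μ (⋃ n, Metric.ball (f n) (1/2)) = ⊤ := by
      rw [measure_iUnion hdisj hmeas]
      simp only [hm]
      exact ENNReal.tsum_const_eq_top_of_ne_zero hpos
    exact top_le_iff.1 (h1 ▸ measure_mono hsub)
  exact ((hpf 0 (R + 1) (by linarith)).2.ne) htop
end
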